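/- arXiv:1208.4664 — 2 statements merged into one kernel-verified Lean document; each statement's English description precedes it below -/
import Mathlib

section
/- Let A be the algebra automorphism of the graded affine Hecke algebra H determined by A(t_w) = t_{w₀ w w₀} and A(ω) = −w₀(ω), and let • be the conjugate-linear anti-involution of H determined by t_w• = t_{w⁻¹} and ω• = ω (ω ∈ V). Let (π,X) be an H-module carrying a *-invariant hermitian form ⟨ , ⟩*, and let κ: X → X be a linear intertwiner between π and its A-twist π^A, i.e., κ∘π(h) = π(A(h))∘κ for all h ∈ H. Then the form ⟨x,y⟩• := ⟨x, π(t_{w₀})κ(y)⟩* is •-invariant: ⟨π(h)x, y⟩• = ⟨x, π(h•)y⟩• for all h ∈ H and x,y ∈ X. -/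
open scoped InnerProductSpace

noncomputable section

variable {V : Type*} [NormedAddCommGroup V] [InnerProductSpace ℝ V] [FiniteDimensional ℝ V]

/-- The orthogonal reflection `s_α` in the hyperplane perpendicular to `α`. -/
def sRefl (α : V) : V ≃ₗᵢ[ℝ] V := Submodule.reflection ((ℝ ∙ α)ᗮ)

/-- The pairing `(v, α∨) = 2(v,α)/(α,α)`. -/
def pair (v α : V) : ℝ := 2 * ⟪v, α⟫_ℝ / ⟪α, α⟫_ℝ

/-- A reduced root system spanning `V`, together with a choice of positive roots and a
Weyl-group-invariant parameter function `k`. -/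
structure RootSystemData (V : Type*) [NormedAddCommGroup V] [InnerProductSpace ℝ V]
    [FiniteDimensional ℝ V] where
  Φ : Finset V
  pos : Finset V
  k : V → ℝ
  zero_not_mem : (0 : V) ∉ Φ
  span_top : Submodule.span ℝ (Φ : Set V) = ⊤
  refl_mem : ∀ α ∈ Φ, ∀ β ∈ Φ, sRefl α β ∈ Φ
  reduced : ∀ α ∈ Φ, (2 : ℝ) • α ∉ Φ
  pos_subset : pos ⊆ Φ
  pos_cover : ∀ α ∈ Φ, α ∈ pos ∨ -α ∈ pos
  pos_disj : ∀ α ∈ pos, -α ∉ pos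
  k_invariant : ∀ g ∈ Subgroup.closure {s : V ≃ₗᵢ[ℝ] V | ∃ α ∈ Φ, s = sRefl α},
      ∀ α ∈ pos, ∀ β ∈ pos, g α = β → k α = k β

/-- The Weyl group, as the subgroup of the isometries of `V` generated by the reflections in
the roots. -/
def Weyl (R : RootSystemData V) : Subgroup (V ≃ₗᵢ[ℝ] V) :=
  Subgroup.closure {s : V ≃ₗᵢ[ℝ] V | ∃ α ∈ R.Φ, s = sRefl α}

/-- The reflection `s_α` as an element of the Weyl group. -/
def sW (R : RootSystemData V) {α : V} (h : α ∈ R.Φ) : Weyl R :=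
  ⟨sRefl α, Subgroup.subset_closure ⟨α, h, rfl⟩⟩

/-- The set of simple roots: positive roots that are not the sum of two positive roots. -/
def simples (R : RootSystemData V) : Set V :=
  {α | α ∈ R.pos ∧ ¬ ∃ β ∈ R.pos, ∃ γ ∈ R.pos, α = β + γ}

/-- The graded affine Hecke algebra attached to `R` and the parameter function `k`: an
associative unital `ℂ`-algebra `H` together with generators `t_w` (`w ∈ W`) and `ω` (`ω ∈ V`),
subject to the defining relations, generating `H`, and satisfying the universal (uniqueness)
property of the algebra defined by these generators and relations. -/
structure GradedHecke (R : RootSystemData V) (H : Type*) [Ring H] [Algebra ℂ H] where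
  t : Weyl R →* H
  x : V → H
  x_add : ∀ v w : V, x (v + w) = x v + x w
  x_smul : ∀ (r : ℝ) (v : V), x (r • v) = (r : ℂ) • x v
  x_comm : ∀ v w : V, x v * x w = x w * x v
  cross : ∀ (v : V) (α : V) (_hs : α ∈ simples R) (hΦ : α ∈ R.Φ),
      x v * t (sW R hΦ) - t (sW R hΦ) * x (sRefl α v)
        = algebraMap ℂ H ((R.k α * pair v α : ℝ) : ℂ)
  gen : Algebra.adjoin ℂ (Set.range t ∪ Set.range x) = ⊤
  lift : ∀ (X : Type) (_ : AddCommGroup X) (_ : Module ℂ X)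
      (t' : Weyl R →* Module.End ℂ X) (x' : V → Module.End ℂ X),
      (∀ v w : V, x' (v + w) = x' v + x' w) →
      (∀ (r : ℝ) (v : V), x' (r • v) = (r : ℂ) • x' v) →
      (∀ v w : V, x' v * x' w = x' w * x' v) →
      (∀ (v : V) (α : V), α ∈ simples R → ∀ hΦ : α ∈ R.Φ,
        x' v * t' (sW R hΦ) - t' (sW R hΦ) * x' (sRefl α v)
          = algebraMap ℂ (Module.End ℂ X) ((R.k α * pair v α : ℝ) : ℂ)) →
      ∃ π : H →ₐ[ℂ] Module.End ℂ X, (∀ w, π (t w) = t' w) ∧ (∀ v, π (x v) = x' v)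

variable {H : Type*} [Ring H] [Algebra ℂ H]

/-- The element `p_ω = ½ Σ_{α ∈ Φ⁺} k_α (ω, α∨) t_{s_α}` of (the image of) `ℂ[W]` in `H`. -/
def pEl (R : RootSystemData V) (HA : GradedHecke R H) (v : V) : H :=
  (1 / 2 : ℂ) • ∑ α ∈ R.pos.attach,
    ((R.k α.1 * pair v α.1 : ℝ) : ℂ) • HA.t (sW R (R.pos_subset α.2))

/-- The element `ω̃ = ω - p_ω` of `H`. -/
def tildeEl (R : RootSystemData V) (HA : GradedHecke R H) (v : V) : H :=
  HA.x v - pEl R HA v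

/-- A conjugate-linear anti-involution of `H`. -/
structure AntiInvolution (H : Type*) [Ring H] [Algebra ℂ H] where
  map : H → H
  map_add : ∀ a b, map (a + b) = map a + map b
  map_smul : ∀ (c : ℂ) (a), map (c • a) = starRingEnd ℂ c • map a
  map_mul : ∀ a b, map (a * b) = map b * map a
  map_involutive : ∀ a, map (map a) = a

/-- `B` is a nondegenerate hermitian form on the `H`-module `(π, X)`, invariant with respect to
the conjugate-linear anti-involution `st` of `H`. -/
def IsInvHermForm {X : Type*} [AddCommGroup X] [Module ℂ X]
    (st : H → H) (π : H →ₐ[ℂ] Module.End ℂ X) (B : X → X → ℂ) : Prop :=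
  (∀ x y z : X, B (x + y) z = B x z + B y z) ∧
  (∀ (c : ℂ) (x y : X), B (c • x) y = c * B x y) ∧
  (∀ x y : X, B y x = starRingEnd ℂ (B x y)) ∧
  (∀ x : X, (∀ y : X, B x y = 0) → x = 0) ∧
  (∀ (h : H) (x y : X), B (π h x) y = B x (π (st h) y))

/-- `(π, X)` is a one `W`-type module: finite-dimensional, `*`-hermitian, irreducible over `H`,
and irreducible after restriction to `ℂ[W]`. -/
def IsOneWType (R : RootSystemData V) (HA : GradedHecke R H) (st : H → H)
    {X : Type*} [AddCommGroup X] [Module ℂ X] (π : H →ₐ[ℂ] Module.End ℂ X) : Prop :=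
  FiniteDimensional ℂ X ∧ Nontrivial X ∧
  (∃ B : X → X → ℂ, IsInvHermForm st π B) ∧
  (∀ U : Submodule ℂ X, (∀ (h : H), ∀ x ∈ U, π h x ∈ U) → U = ⊥ ∨ U = ⊤) ∧
  (∀ U : Submodule ℂ X, (∀ (w : Weyl R), ∀ x ∈ U, π (HA.t w) x ∈ U) → U = ⊥ ∨ U = ⊤)


/-- Let `A` be the algebra automorphism of `H` with `A(t_w) = t_{w₀ w w₀}` and
`A(ω) = -w₀(ω)`, and let `•` be the conjugate-linear anti-involution with `t_w• = t_{w⁻¹}` and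
`ω• = ω`. If `(π, X)` carries a `*`-invariant hermitian form `⟨,⟩*` and `κ : X → X` intertwines
`π` with its `A`-twist, then the form `⟨x, y⟩• := ⟨x, π(t_{w₀}) κ(y)⟩*` is `•`-invariant. -/
theorem bullet_invariant_form
    (R : RootSystemData V) (HA : GradedHecke R H)
    (st : AntiInvolution H) (w₀ : Weyl R)
    (hw₀ : ∀ α ∈ R.pos, -((w₀ : V ≃ₗᵢ[ℝ] V) α) ∈ R.pos)
    (hst_t : ∀ w : Weyl R, st.map (HA.t w) = HA.t w⁻¹)
    (hst_x : ∀ v : V, st.map (HA.x v) = -(HA.t w₀ * HA.x ((w₀ : V ≃ₗᵢ[ℝ] V) v) * HA.t w₀))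
    (A : H ≃ₐ[ℂ] H)
    (hA_t : ∀ w : Weyl R, A (HA.t w) = HA.t (w₀ * w * w₀))
    (hA_x : ∀ v : V, A (HA.x v) = -HA.x ((w₀ : V ≃ₗᵢ[ℝ] V) v))
    (bl : AntiInvolution H)
    (hbl_t : ∀ w : Weyl R, bl.map (HA.t w) = HA.t w⁻¹)
    (hbl_x : ∀ v : V, bl.map (HA.x v) = HA.x v)
    {X : Type*} [AddCommGroup X] [Module ℂ X] (π : H →ₐ[ℂ] Module.End ℂ X)
    (B : X → X → ℂ)
    (hB_add : ∀ x y z : X, B (x + y) z = B x z + B y z)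
    (hB_smul : ∀ (c : ℂ) (x y : X), B (c • x) y = c * B x y)
    (hB_conj : ∀ x y : X, B y x = starRingEnd ℂ (B x y))
    (hB_inv : ∀ (h : H) (x y : X), B (π h x) y = B x (π (st.map h) y))
    (κ : X →ₗ[ℂ] X) (hκ : ∀ (h : H) (x : X), κ (π h x) = π (A h) (κ x)) :
    ∀ (h : H) (x y : X),
      B (π h x) (π (HA.t w₀) (κ y)) = B x (π (HA.t w₀) (κ (π (bl.map h) y))) := by
  classical
  -- `t (w₀ * w₀) = 1`, forced by `hA_t` at `w = 1`.
  have htg : HA.t (w₀ * w₀) = 1 := by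
    have h1 := (hA_t 1).symm
    simpa using h1
  -- anti-involutions send 1 to 1 and 0 to 0
  have st_one : st.map 1 = 1 := by
    have h := st.map_mul (st.map 1) 1
    rw [mul_one, st.map_involutive, mul_one] at h
    exact h.symm
  have bl_one : bl.map 1 = 1 := by
    have h := bl.map_mul (bl.map 1) 1
    rw [mul_one, bl.map_involutive, mul_one] at h
    exact h.symm
  have st_zero : st.map 0 = 0 := by
    have h := st.map_smul 0 0
    simpa using h
  have bl_zero : bl.map 0 = 0 := by
    have h := bl.map_smul 0 0
    simpa using h
  -- the key algebra identity, proved on generators and propagated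
  have key : ∀ h : H, st.map h * HA.t w₀ = HA.t w₀ * A (bl.map h) := by
    set S : Subalgebra ℂ H :=
      { carrier := {h : H | st.map h * HA.t w₀ = HA.t w₀ * A (bl.map h)}
        mul_mem' := by
          intro a b ha hb
          simp only [Set.mem_setOf_eq] at ha hb ⊢
          rw [st.map_mul, bl.map_mul, map_mul, mul_assoc, ha, ← mul_assoc, hb, mul_assoc]
        one_mem' := by
          simp only [Set.mem_setOf_eq, st_one, bl_one, map_one, one_mul, mul_one]
        add_mem' := by
          intro a b ha hb
          simp only [Set.mem_setOf_eq] at ha hb ⊢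
          rw [st.map_add, bl.map_add, map_add, add_mul, mul_add, ha, hb]
        zero_mem' := by
          simp only [Set.mem_setOf_eq, st_zero, bl_zero, map_zero, zero_mul, mul_zero]
        algebraMap_mem' := by
          intro c
          simp only [Set.mem_setOf_eq, Algebra.algebraMap_eq_smul_one]
          rw [st.map_smul, bl.map_smul, map_smul, st_one, bl_one, map_one,
            smul_mul_assoc, mul_smul_comm, one_mul, mul_one] } with hSdef
    have hgen : Set.range HA.t ∪ Set.range HA.x ⊆ (S : Set H) := by
      rintro h (⟨w, rfl⟩ | ⟨v, rfl⟩)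
      · show st.map (HA.t w) * HA.t w₀ = HA.t w₀ * A (bl.map (HA.t w))
        rw [hst_t, hbl_t, hA_t]
        have hgrp : (w₀ * (w₀ * w⁻¹ * w₀)) = (w₀ * w₀) * (w⁻¹ * w₀) := by group
        rw [← map_mul, ← map_mul, hgrp, map_mul HA.t (w₀ * w₀) (w⁻¹ * w₀), htg, one_mul]
      · show st.map (HA.x v) * HA.t w₀ = HA.t w₀ * A (bl.map (HA.x v))
        rw [hst_x, hbl_x, hA_x, neg_mul, mul_neg,
          mul_assoc (HA.t w₀ * HA.x ((w₀ : V ≃ₗᵢ[ℝ] V) v)), ← map_mul, htg, mul_one]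
    have hle : (⊤ : Subalgebra ℂ H) ≤ S := by
      rw [← HA.gen]
      exact Algebra.adjoin_le hgen
    intro h
    exact hle (Algebra.mem_top : h ∈ (⊤ : Subalgebra ℂ H))
  intro h x y
  rw [hB_inv h x (π (HA.t w₀) (κ y))]
  congr 1
  calc π (st.map h) (π (HA.t w₀) (κ y))
      = π (st.map h * HA.t w₀) (κ y) := by rw [map_mul]; rfl
    _ = π (HA.t w₀ * A (bl.map h)) (κ y) := by rw [key h]
    _ = π (HA.t w₀) (π (A (bl.map h)) (κ y)) := by rw [map_mul]; rfl
    _ = π (HA.t w₀) (κ (π (bl.map h) y)) := by rw [hκ]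

end
end

section
/- Let k_s, k_ℓ be positive real numbers and let d₁, m₁, d₂, m₂ be positive integers with d₁ ≥ m₂ and m₁ ≥ d₂. Let λ_v be the partition with m₁ parts equal to d₁ followed by d₂ parts equal to m₂ (vertical gluing of the rectangles), and let λ_h be the partition with d₂ parts equal to d₁+m₂ followed by m₁−d₂ parts equal to d₁ (horizontal gluing); both are partitions of n = d₁m₁ + d₂m₂. For a partition λ, let M(λ) be the multiset of real numbers {k_s + (j−i)k_ℓ : (i,j) a box of the Young diagram of λ, with i the row index and j the column index}. Then M(λ_v) and M(λ_h) lie in the same orbit under permutations and sign changes of entries (equivalently, the multisets of absolute values of their entries coincide) if and only if m₁ − d₁ = m₂ − d₂ + 2k_s/k_ℓ. -/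
noncomputable section

/-- The multiset of tableau entries of a Young diagram with rows `rows` (row `i` having
`rows.getD i 0` boxes), where the box in (0-indexed) row `i` and column `j` is filled with
`ks + (j - i) * kl`: the filling starts with `ks` in the upper left corner, increases by `kl`
along rows and decreases by `kl` down columns. -/
def tabMultiset (ks kl : ℝ) (rows : List ℕ) : Multiset ℝ :=
  (((List.range rows.length).map (fun i =>
    (List.range (rows.getD i 0)).map (fun j => ks + ((j : ℝ) - (i : ℝ)) * kl))).flatten : List ℝ)


private lemma sumFinsum {ι : Type*} (s : Finset ι) (g : ι → Multiset ℝ) :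
    (∑ i ∈ s, g i).sum = ∑ i ∈ s, (g i).sum := by
  induction s using Finset.cons_induction with
  | empty => simp
  | cons a s ha ih => simp [Finset.sum_cons, ih]

private lemma sumSumReflect {M : Type*} [AddCommMonoid M] (g : ℕ → ℕ → M) (n m : ℕ) :
    ∑ a ∈ Finset.range n, ∑ b ∈ Finset.range m, g (n-1-a) (m-1-b)
      = ∑ a ∈ Finset.range n, ∑ b ∈ Finset.range m, g a b :=
  calc ∑ a ∈ Finset.range n, ∑ b ∈ Finset.range m, g (n-1-a) (m-1-b)
      = ∑ a ∈ Finset.range n, ∑ b ∈ Finset.range m, g (n-1-a) b :=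
        Finset.sum_congr rfl fun _ _ => Finset.sum_range_reflect _ _
    _ = ∑ a ∈ Finset.range n, ∑ b ∈ Finset.range m, g a b :=
        Finset.sum_range_reflect (fun a => ∑ b ∈ Finset.range m, g a b) n

private lemma castReflect {n a : ℕ} (h : a < n) : ((n-1-a : ℕ):ℝ) = (n:ℝ)-1-a := by
  have h' : n - 1 - a + (a+1) = n := by omega
  have := congrArg (fun k : ℕ => (k:ℝ)) h'
  push_cast at this; linarith

private lemma flattenCoe (n : ℕ) (f : ℕ → List ℝ) :
    (((List.range n).map f).flatten : Multiset ℝ) = ∑ i ∈ Finset.range n, (f i : Multiset ℝ) := by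
  induction n with
  | zero => simp
  | succ n ih => simp [List.range_succ, Finset.sum_range_succ, ih, ← Multiset.coe_add]

private lemma coeMapRange (g : ℕ → ℝ) (n : ℕ) :
    (((List.range n).map g : List ℝ) : Multiset ℝ) = ∑ b ∈ Finset.range n, ({g b} : Multiset ℝ) := by
  induction n with
  | zero => simp
  | succ n ih => simp [List.range_succ, Finset.sum_range_succ, ih, ← Multiset.coe_add]

private lemma mapFinsum {ι : Type*} (s : Finset ι) (g : ι → Multiset ℝ) (f : ℝ → ℝ) :
    (∑ i ∈ s, g i).map f = ∑ i ∈ s, (g i).map f := by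
  induction s using Finset.cons_induction with
  | empty => simp
  | cons a s ha ih => simp [Finset.sum_cons, ih]

private lemma getDAppendLt (m i a : ℕ) (l : List ℕ) (h : i < m) :
    (List.replicate m a ++ l).getD i 0 = a := by
  rw [List.getD_append _ _ _ _ (by simpa using h)]
  simp [List.getD, h]

private lemma getDAppendAdd (m i a : ℕ) (l : List ℕ) :
    (List.replicate m a ++ l).getD (m + i) 0 = l.getD i 0 := by
  rw [List.getD_append_right _ _ _ _ (by simp)]
  simp

private lemma getDReplicateLt (n i a : ℕ) (h : i < n) :
    (List.replicate n a).getD i 0 = a := by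
  simp [List.getD, List.getElem?_replicate, h]

private lemma tabAbsEq (ks kl : ℝ) (rows : List ℕ) :
    (tabMultiset ks kl rows).map (fun x => |x|) =
      ∑ i ∈ Finset.range rows.length, ∑ j ∈ Finset.range (rows.getD i 0),
        ({|ks + ((j:ℝ) - (i:ℝ)) * kl|} : Multiset ℝ) := by
  rw [tabMultiset, flattenCoe, mapFinsum]
  refine Finset.sum_congr rfl fun i _ => ?_
  have hdo : ((List.range (rows.getD i 0) : List ℕ) >>= fun a => (pure ((a:ℝ)) : List ℝ))
      = List.map (fun a : ℕ => (a:ℝ)) (List.range (rows.getD i 0)) :=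
    List.flatMap_pure_eq_map _ _
  rw [hdo, List.map_map, coeMapRange, mapFinsum]
  simp

private lemma keyIff (ks kl : ℝ) (hkl : 0 < kl)
    (d₁ m₁ d₂ m₂ : ℕ) (hd₁ : 0 < d₁) (hm₁ : 0 < m₁) (hd₂ : 0 < d₂) (hm₂ : 0 < m₂) :
    ((∑ a ∈ Finset.range d₂, ∑ b ∈ Finset.range m₂,
        ({|ks + ((b:ℝ) - ((m₁:ℝ) + (a:ℝ))) * kl|} : Multiset ℝ))
      = ∑ a ∈ Finset.range d₂, ∑ b ∈ Finset.range m₂,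
        ({|ks + (((d₁:ℝ) + (b:ℝ)) - (a:ℝ)) * kl|} : Multiset ℝ))
      ↔ (m₁ : ℝ) - d₁ = (m₂ : ℝ) - d₂ + 2 * ks / kl := by
  have h0 := hkl.ne'
  have hDiff : ((m₁:ℝ) - d₁ = (m₂:ℝ) - d₂ + 2*ks/kl) ↔ 2*ks + ((d₁:ℝ)+m₂-d₂-m₁)*kl = 0 := by
    constructor <;> intro h
    · field_simp at h; linarith
    · field_simp; linarith
  rw [hDiff]
  constructor
  · intro h
    have h2 := congrArg (fun M : Multiset ℝ => (M.map (fun x => x^2)).sum) h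
    simp only [mapFinsum, sumFinsum, Multiset.map_singleton, Multiset.sum_singleton, sq_abs] at h2
    -- h2 : ∑∑ fv^2 = ∑∑ fh^2
    set D : ℝ := 2*ks + ((d₁:ℝ)+m₂-d₂-m₁)*kl with hDdef
    have hrsq : ∑ a ∈ Finset.range d₂, ∑ b ∈ Finset.range m₂,
        (ks + (((d₁:ℝ) + ((m₂-1-b:ℕ):ℝ)) - ((d₂-1-a:ℕ):ℝ)) * kl)^2
        = ∑ a ∈ Finset.range d₂, ∑ b ∈ Finset.range m₂,
        (ks + (((d₁:ℝ) + (b:ℝ)) - (a:ℝ)) * kl)^2 :=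
      sumSumReflect (fun a b => (ks + (((d₁:ℝ) + (b:ℝ)) - (a:ℝ)) * kl)^2) d₂ m₂
    have hr : ∑ a ∈ Finset.range d₂, ∑ b ∈ Finset.range m₂,
        (ks + (((d₁:ℝ) + ((m₂-1-b:ℕ):ℝ)) - ((d₂-1-a:ℕ):ℝ)) * kl)
        = ∑ a ∈ Finset.range d₂, ∑ b ∈ Finset.range m₂,
        (ks + (((d₁:ℝ) + (b:ℝ)) - (a:ℝ)) * kl) :=
      sumSumReflect (fun a b => ks + (((d₁:ℝ) + (b:ℝ)) - (a:ℝ)) * kl) d₂ m₂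
    have key1 : ∑ a ∈ Finset.range d₂, ∑ b ∈ Finset.range m₂,
        ((ks + ((b:ℝ) - ((m₁:ℝ) + (a:ℝ))) * kl)^2
          - (ks + (((d₁:ℝ) + ((m₂-1-b:ℕ):ℝ)) - ((d₂-1-a:ℕ):ℝ)) * kl)^2) = 0 := by
      simp only [Finset.sum_sub_distrib]
      rw [hrsq, h2, sub_self]
    have key2 : ∑ a ∈ Finset.range d₂, ∑ b ∈ Finset.range m₂,
        ((ks + ((b:ℝ) - ((m₁:ℝ) + (a:ℝ))) * kl)^2
          - (ks + (((d₁:ℝ) + ((m₂-1-b:ℕ):ℝ)) - ((d₂-1-a:ℕ):ℝ)) * kl)^2)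
        = D * (∑ a ∈ Finset.range d₂, ∑ b ∈ Finset.range m₂,
            ((ks + ((b:ℝ) - ((m₁:ℝ) + (a:ℝ))) * kl)
              - (ks + (((d₁:ℝ) + ((m₂-1-b:ℕ):ℝ)) - ((d₂-1-a:ℕ):ℝ)) * kl))) := by
      rw [Finset.mul_sum]
      refine Finset.sum_congr rfl fun a ha => ?_
      rw [Finset.mul_sum]
      refine Finset.sum_congr rfl fun b hb => ?_
      have ea := castReflect (Finset.mem_range.mp ha)
      have eb := castReflect (Finset.mem_range.mp hb)
      have hxy : (ks + ((b:ℝ) - ((m₁:ℝ) + (a:ℝ))) * kl)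
          + (ks + (((d₁:ℝ) + ((m₂-1-b:ℕ):ℝ)) - ((d₂-1-a:ℕ):ℝ)) * kl) = D := by
        rw [ea, eb, hDdef]; ring
      linear_combination (ks + ((b:ℝ) - ((m₁:ℝ) + (a:ℝ))) * kl
        - (ks + (((d₁:ℝ) + ((m₂-1-b:ℕ):ℝ)) - ((d₂-1-a:ℕ):ℝ)) * kl)) * hxy
    have hconst : ∑ a ∈ Finset.range d₂, ∑ b ∈ Finset.range m₂,
        ((ks + ((b:ℝ) - ((m₁:ℝ) + (a:ℝ))) * kl)
          - (ks + (((d₁:ℝ) + (b:ℝ)) - (a:ℝ)) * kl))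
        = (d₂:ℝ) * m₂ * (-(((m₁:ℝ) + (d₁:ℝ))) * kl) := by
      have : ∀ a b : ℕ, (ks + ((b:ℝ) - ((m₁:ℝ) + (a:ℝ))) * kl)
          - (ks + (((d₁:ℝ) + (b:ℝ)) - (a:ℝ)) * kl) = -(((m₁:ℝ) + (d₁:ℝ))) * kl := by
        intro a b; ring
      simp only [this, Finset.sum_const, Finset.card_range, nsmul_eq_mul]
      ring
    have hsub : ∑ a ∈ Finset.range d₂, ∑ b ∈ Finset.range m₂,
        ((ks + ((b:ℝ) - ((m₁:ℝ) + (a:ℝ))) * kl)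
          - (ks + (((d₁:ℝ) + ((m₂-1-b:ℕ):ℝ)) - ((d₂-1-a:ℕ):ℝ)) * kl))
        = (d₂:ℝ) * m₂ * (-(((m₁:ℝ) + (d₁:ℝ))) * kl) := by
      simp only [Finset.sum_sub_distrib] at hconst ⊢
      rw [hr]; exact hconst
    rw [key2, hsub] at key1
    have hne : (d₂:ℝ) * m₂ * (-(((m₁:ℝ) + (d₁:ℝ))) * kl) ≠ 0 := by
      have h1 : (0:ℝ) < (d₂:ℝ) * m₂ * (((m₁:ℝ) + (d₁:ℝ)) * kl) := by positivity
      intro hc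
      nlinarith [hc, h1]
    rcases mul_eq_zero.mp key1 with h | h
    · exact h
    · exact absurd h hne
  · intro hD
    rw [← sumSumReflect (fun a b =>
        ({|ks + (((d₁:ℝ) + (b:ℝ)) - (a:ℝ)) * kl|} : Multiset ℝ)) d₂ m₂]
    refine Finset.sum_congr rfl fun a ha => Finset.sum_congr rfl fun b hb => ?_
    have ea := castReflect (Finset.mem_range.mp ha)
    have eb := castReflect (Finset.mem_range.mp hb)
    have : ks + ((b:ℝ) - ((m₁:ℝ) + (a:ℝ))) * kl
        = -(ks + (((d₁:ℝ) + ((m₂-1-b:ℕ):ℝ)) - ((d₂-1-a:ℕ):ℝ)) * kl) := by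
      rw [ea, eb]; linear_combination hD
    rw [this, abs_neg]

/-- Let `ks, kl > 0` and `d₁, m₁, d₂, m₂` be positive integers with `d₁ ≥ m₂`
and `m₁ ≥ d₂`. Let `λ_v` be the partition with `m₁` parts equal to `d₁` followed by `d₂` parts
equal to `m₂` (vertical gluing), and `λ_h` the partition with `d₂` parts equal to `d₁ + m₂`
followed by `m₁ - d₂` parts equal to `d₁` (horizontal gluing). Then the multisets `M(λ_v)` and
`M(λ_h)` of tableau entries lie in the same orbit under permutations and sign changes
(equivalently, their multisets of absolute values coincide) if and only if
`m₁ - d₁ = m₂ - d₂ + 2 ks / kl`. -/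
theorem glued_tableaux_same_orbit_iff
    (ks kl : ℝ) (hks : 0 < ks) (hkl : 0 < kl)
    (d₁ m₁ d₂ m₂ : ℕ) (hd₁ : 0 < d₁) (hm₁ : 0 < m₁) (hd₂ : 0 < d₂) (hm₂ : 0 < m₂)
    (h₁ : m₂ ≤ d₁) (h₂ : d₂ ≤ m₁) :
    (tabMultiset ks kl (List.replicate m₁ d₁ ++ List.replicate d₂ m₂)).map (fun x => |x|)
        = (tabMultiset ks kl
            (List.replicate d₂ (d₁ + m₂) ++ List.replicate (m₁ - d₂) d₁)).map (fun x => |x|)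
      ↔ (m₁ : ℝ) - d₁ = (m₂ : ℝ) - d₂ + 2 * ks / kl := by
  have hv : (tabMultiset ks kl (List.replicate m₁ d₁ ++ List.replicate d₂ m₂)).map (fun x => |x|)
      = (∑ i ∈ Finset.range m₁, ∑ j ∈ Finset.range d₁,
          ({|ks + ((j:ℝ) - (i:ℝ)) * kl|} : Multiset ℝ))
        + ∑ a ∈ Finset.range d₂, ∑ b ∈ Finset.range m₂,
          ({|ks + ((b:ℝ) - ((m₁ + a : ℕ):ℝ)) * kl|} : Multiset ℝ) := by
    rw [tabAbsEq]
    simp only [List.length_append, List.length_replicate]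
    rw [Finset.sum_range_add]
    congr 1
    · exact Finset.sum_congr rfl fun i hi => by
        rw [getDAppendLt _ _ _ _ (Finset.mem_range.mp hi)]
    · exact Finset.sum_congr rfl fun a ha => by
        rw [getDAppendAdd, getDReplicateLt _ _ _ (Finset.mem_range.mp ha)]
  have hh : (tabMultiset ks kl
        (List.replicate d₂ (d₁ + m₂) ++ List.replicate (m₁ - d₂) d₁)).map (fun x => |x|)
      = (∑ i ∈ Finset.range m₁, ∑ j ∈ Finset.range d₁,
          ({|ks + ((j:ℝ) - (i:ℝ)) * kl|} : Multiset ℝ))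
        + ∑ a ∈ Finset.range d₂, ∑ b ∈ Finset.range m₂,
          ({|ks + (((d₁ + b : ℕ):ℝ) - (a:ℝ)) * kl|} : Multiset ℝ) := by
    rw [tabAbsEq]
    simp only [List.length_append, List.length_replicate]
    rw [Finset.sum_range_add]
    have e1 : ∑ i ∈ Finset.range d₂, ∑ j ∈ Finset.range
          ((List.replicate d₂ (d₁ + m₂) ++ List.replicate (m₁ - d₂) d₁).getD i 0),
          ({|ks + ((j:ℝ) - (i:ℝ)) * kl|} : Multiset ℝ)
        = ∑ i ∈ Finset.range d₂, (∑ j ∈ Finset.range d₁,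
            ({|ks + ((j:ℝ) - (i:ℝ)) * kl|} : Multiset ℝ)
          + ∑ b ∈ Finset.range m₂,
            ({|ks + (((d₁ + b : ℕ):ℝ) - (i:ℝ)) * kl|} : Multiset ℝ)) :=
      Finset.sum_congr rfl fun i hi => by
        rw [getDAppendLt _ _ _ _ (Finset.mem_range.mp hi)]
        exact Finset.sum_range_add _ d₁ m₂
    have e2 : ∑ i ∈ Finset.range (m₁ - d₂), ∑ j ∈ Finset.range
          ((List.replicate d₂ (d₁ + m₂) ++ List.replicate (m₁ - d₂) d₁).getD (d₂ + i) 0),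
          ({|ks + ((j:ℝ) - ((d₂ + i : ℕ):ℝ)) * kl|} : Multiset ℝ)
        = ∑ i ∈ Finset.range (m₁ - d₂), ∑ j ∈ Finset.range d₁,
          ({|ks + ((j:ℝ) - ((d₂ + i : ℕ):ℝ)) * kl|} : Multiset ℝ) :=
      Finset.sum_congr rfl fun i hi => by
        rw [getDAppendAdd, getDReplicateLt _ _ _ (Finset.mem_range.mp hi)]
    rw [e1, e2, Finset.sum_add_distrib, add_right_comm]
    congr 1
    rw [← Finset.sum_range_add (fun i => ∑ j ∈ Finset.range d₁,
        ({|ks + ((j:ℝ) - (i:ℝ)) * kl|} : Multiset ℝ)) d₂ (m₁ - d₂),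
      Nat.add_sub_cancel' h₂]
  rw [hv, hh, add_right_inj]
  simp only [Nat.cast_add]
  exact keyIff ks kl hkl d₁ m₁ d₂ m₂ hd₁ hm₁ hd₂ hm₂

end
end
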